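/- Let G be a group, H a normal subgroup of index 2 in a subgroup H' ≤ G, with H' = H ⊔ sH, and let i : G/H → G/H be the involution i(fH) = fsH. Define V₁ = {φ ∈ ℓ²(G/H) : φ∘i = φ} (even functions) and V₂ = {φ ∈ ℓ²(G/H) : φ∘i = −φ} (odd functions). Then V₁ and V₂ are nonzero closed G-invariant subspaces of ℓ²(G/H) that are orthogonal complements of each other; in particular, if G/H is infinite, the quasi-regular representation of G on ℓ²(G/H) is reducible. -/

import Mathlib

/-!
The involution `i` is right multiplication by `s` on `G ⧸ H`. It commutes with the left
`G`-action, squares to the identity because `s² ∈ H`, and has no fixed point because `s ∉ H`.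
Hence the even and odd parts `(φ ± φ ∘ i) / 2` split `ℓ²(G ⧸ H)` orthogonally into two
closed `G`-invariant subspaces, each containing `δ_x ± δ_{i x}`, so neither is `0` or everything.
-/

open Function

namespace lp

variable {𝕜 X : Type*} [RCLike 𝕜]

local notation "ℓ²" => lp (fun _ : X => 𝕜) 2

variable (𝕜) in
def evenSubmodule (i : X → X) : Submodule 𝕜 ℓ² where
  carrier := {φ | ∀ x, φ (i x) = φ x}
  add_mem' hφ hψ x := by simp only [coeFn_add, Pi.add_apply, hφ x, hψ x]
  zero_mem' _ := rfl
  smul_mem' c φ hφ x := by simp only [coeFn_smul, Pi.smul_apply, hφ x]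

variable (𝕜) in
def oddSubmodule (i : X → X) : Submodule 𝕜 ℓ² where
  carrier := {φ | ∀ x, φ (i x) = -φ x}
  add_mem' hφ hψ x := by simp only [coeFn_add, Pi.add_apply, hφ x, hψ x, neg_add]
  zero_mem' _ := by simp
  smul_mem' c φ hφ x := by simp only [coeFn_smul, Pi.smul_apply, hφ x, smul_neg]

variable {i : X → X}

theorem mem_evenSubmodule {φ : ℓ²} : φ ∈ evenSubmodule 𝕜 i ↔ ∀ x, φ (i x) = φ x := Iff.rfl

theorem mem_oddSubmodule {φ : ℓ²} : φ ∈ oddSubmodule 𝕜 i ↔ ∀ x, φ (i x) = -φ x := Iff.rfl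

theorem isClosed_evenSubmodule : IsClosed (evenSubmodule 𝕜 i : Set ℓ²) := by
  change IsClosed {φ : ℓ² | ∀ x, φ (i x) = φ x}
  rw [Set.ofPred_forall]
  exact isClosed_iInter fun x =>
    isClosed_eq (lipschitzWith_one_eval 2 (i x)).continuous (lipschitzWith_one_eval 2 x).continuous

theorem isClosed_oddSubmodule : IsClosed (oddSubmodule 𝕜 i : Set ℓ²) := by
  change IsClosed {φ : ℓ² | ∀ x, φ (i x) = -φ x}
  rw [Set.ofPred_forall]
  exact isClosed_iInter fun x =>
    isClosed_eq (lipschitzWith_one_eval 2 (i x)).continuous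
      (lipschitzWith_one_eval 2 x).continuous.neg

theorem apply_mem_evenSubmodule {T : ℓ² → ℓ²} {τ : X → X} (hT : ∀ φ x, T φ x = φ (τ x))
    (hτ : Function.Commute τ i) {φ : ℓ²} (hφ : φ ∈ evenSubmodule 𝕜 i) :
    T φ ∈ evenSubmodule 𝕜 i := by
  intro x
  rw [hT, hT, hτ.eq, hφ]

theorem apply_mem_oddSubmodule {T : ℓ² → ℓ²} {τ : X → X} (hT : ∀ φ x, T φ x = φ (τ x))
    (hτ : Function.Commute τ i) {φ : ℓ²} (hφ : φ ∈ oddSubmodule 𝕜 i) :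
    T φ ∈ oddSubmodule 𝕜 i := by
  intro x
  rw [hT, hT, hτ.eq, hφ]

theorem single_add_single_mem_evenSubmodule [DecidableEq X] (hi : Involutive i) (x : X) (a : 𝕜) :
    lp.single 2 x a + lp.single 2 (i x) a ∈ evenSubmodule 𝕜 i := by
  intro y
  simp only [coeFn_add, Pi.add_apply, lp.single_apply, Pi.single_apply, hi.eq_iff, hi x]
  exact add_comm _ _

theorem single_sub_single_mem_oddSubmodule [DecidableEq X] (hi : Involutive i) (x : X) (a : 𝕜) :
    lp.single 2 x a - lp.single 2 (i x) a ∈ oddSubmodule 𝕜 i := by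
  intro y
  simp only [coeFn_sub, Pi.sub_apply, lp.single_apply, Pi.single_apply, hi.eq_iff, hi x]
  exact (neg_sub _ _).symm

theorem evenSubmodule_ne_bot [Nonempty X] (hi : Involutive i) : evenSubmodule 𝕜 i ≠ ⊥ := by
  classical
  obtain ⟨x⟩ := ‹Nonempty X›
  refine (Submodule.ne_bot_iff _).2 ⟨_, single_add_single_mem_evenSubmodule hi x 1, fun h => ?_⟩
  have hx := congrArg (· x) h
  simp only [coeFn_add, Pi.add_apply, lp.single_apply, Pi.single_eq_same, Pi.single_apply,
    coeFn_zero, Pi.zero_apply] at hx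
  split_ifs at hx <;> norm_num at hx

theorem oddSubmodule_ne_bot (hi : Involutive i) {x : X} (hx : i x ≠ x) :
    oddSubmodule 𝕜 i ≠ ⊥ := by
  classical
  refine (Submodule.ne_bot_iff _).2 ⟨_, single_sub_single_mem_oddSubmodule hi x 1, fun h => ?_⟩
  have h := congrArg (· x) h
  simp [hx.symm] at h

theorem oddSubmodule_eq_orthogonal (hi : Involutive i) :
    oddSubmodule 𝕜 i = (evenSubmodule 𝕜 i)ᗮ := by
  classical
  ext φ
  refine ⟨fun hφ => (Submodule.mem_orthogonal _ _).2 fun ψ hψ => ?_, fun hφ x => ?_⟩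
  · have h := (hi.toPerm i).tsum_eq fun x => inner 𝕜 (ψ x) (φ x)
    simp only [Involutive.coe_toPerm, hψ _, hφ _, inner_neg_right, tsum_neg] at h
    rw [lp.inner_eq_tsum]
    exact CharZero.neg_eq_self_iff.1 h
  · have h := (Submodule.mem_orthogonal _ _).1 hφ _ (single_add_single_mem_evenSubmodule hi x 1)
    rw [inner_add_left, lp.inner_single_left, lp.inner_single_left] at h
    simp only [RCLike.inner_apply, map_one, mul_one] at h
    exact eq_neg_of_add_eq_zero_right h

theorem evenSubmodule_ne_top (hi : Involutive i) {x : X} (hx : i x ≠ x) :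
    evenSubmodule 𝕜 i ≠ ⊤ := fun htop =>
  oddSubmodule_ne_bot (𝕜 := 𝕜) hi hx <| by
    rw [oddSubmodule_eq_orthogonal hi, htop, Submodule.top_orthogonal_eq_bot]

end lp

namespace QuotientGroup

variable {G : Type*} [Group G] {H : Subgroup G} {s : G} {i : G ⧸ H → G ⧸ H}

theorem involutive_of_mul_self_mem (hi : ∀ f : G, i f = (f * s : G)) (hs : s * s ∈ H) :
    Involutive i := by
  intro x
  induction x using QuotientGroup.induction_on with
  | H f =>
    rw [hi, hi, QuotientGroup.eq, mul_assoc, mul_inv_rev, inv_mul_cancel_right]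
    exact inv_mem hs

theorem apply_ne_self_of_notMem (hi : ∀ f : G, i f = (f * s : G)) (hs : s ∉ H) (x : G ⧸ H) :
    i x ≠ x := by
  induction x using QuotientGroup.induction_on with
  | H f =>
    rw [hi, Ne, QuotientGroup.eq, mul_inv_rev, inv_mul_cancel_right, inv_mem_iff]
    exact hs

theorem commute_smul (hi : ∀ f : G, i f = (f * s : G)) (g : G) : Function.Commute (g • ·) i := by
  intro x
  induction x using QuotientGroup.induction_on with
  | H f => simp only [hi, MulAction.Quotient.smul_coe, smul_eq_mul, mul_assoc]

end QuotientGroup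

theorem stmt8_general (G : Type*) [Group G] (H H' : Subgroup G)
    (s : G) (hs : s ∈ H') (hsH : s ∉ H)
    (hdecomp : ∀ g ∈ H', g ∈ H ∨ ∃ h ∈ H, g = s * h)
    (i : G ⧸ H → G ⧸ H) (hi : ∀ f : G, i (f : G ⧸ H) = ((f * s : G) : G ⧸ H))
    (π : G →* (lp (fun _ : G ⧸ H => ℂ) 2 ≃ₗᵢ[ℂ] lp (fun _ : G ⧸ H => ℂ) 2))
    (hπ : ∀ (g : G) (φ : lp (fun _ : G ⧸ H => ℂ) 2) (x : G ⧸ H), π g φ x = φ (g⁻¹ • x)) :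
    ∃ V₁ V₂ : Submodule ℂ (lp (fun _ : G ⧸ H => ℂ) 2),
      (∀ φ : lp (fun _ : G ⧸ H => ℂ) 2, φ ∈ V₁ ↔ ∀ x, φ (i x) = φ x) ∧
      (∀ φ : lp (fun _ : G ⧸ H => ℂ) 2, φ ∈ V₂ ↔ ∀ x, φ (i x) = -φ x) ∧
      V₁ ≠ ⊥ ∧ V₂ ≠ ⊥ ∧
      IsClosed (V₁ : Set (lp (fun _ : G ⧸ H => ℂ) 2)) ∧
      IsClosed (V₂ : Set (lp (fun _ : G ⧸ H => ℂ) 2)) ∧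
      (∀ (g : G), ∀ φ ∈ V₁, π g φ ∈ V₁) ∧
      (∀ (g : G), ∀ φ ∈ V₂, π g φ ∈ V₂) ∧
      V₂ = V₁ᗮ ∧
      (Infinite (G ⧸ H) →
        ∃ W : Submodule ℂ (lp (fun _ : G ⧸ H => ℂ) 2),
          IsClosed (W : Set (lp (fun _ : G ⧸ H => ℂ) 2)) ∧
          (∀ (g : G), ∀ φ ∈ W, π g φ ∈ W) ∧ W ≠ ⊥ ∧ W ≠ ⊤) := by
  have hs2 : s * s ∈ H := by
    obtain h | ⟨h, hh, hsh⟩ := hdecomp (s * s) (mul_mem hs hs)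
    · exact h
    · exact absurd (mul_left_cancel hsh ▸ hh) hsH
  have hinv := QuotientGroup.involutive_of_mul_self_mem hi hs2
  have hfree := QuotientGroup.apply_ne_self_of_notMem hi hsH (1 : G)
  have heven : ∀ g, ∀ φ ∈ lp.evenSubmodule ℂ i, π g φ ∈ lp.evenSubmodule ℂ i := fun g _ =>
    lp.apply_mem_evenSubmodule (hπ g) (QuotientGroup.commute_smul hi g⁻¹)
  have hodd : ∀ g, ∀ φ ∈ lp.oddSubmodule ℂ i, π g φ ∈ lp.oddSubmodule ℂ i := fun g _ =>
    lp.apply_mem_oddSubmodule (hπ g) (QuotientGroup.commute_smul hi g⁻¹)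
  exact ⟨_, _, fun _ => lp.mem_evenSubmodule,
    fun _ => lp.mem_oddSubmodule, lp.evenSubmodule_ne_bot hinv,
    lp.oddSubmodule_ne_bot hinv hfree, lp.isClosed_evenSubmodule, lp.isClosed_oddSubmodule,
    heven, hodd, lp.oddSubmodule_eq_orthogonal hinv, fun _ => ⟨_, lp.isClosed_evenSubmodule,
      heven, lp.evenSubmodule_ne_bot hinv, lp.evenSubmodule_ne_top hinv hfree⟩⟩

/-- With `i : G/H → G/H` the involution `fH ↦ fsH`, the even and odd
functions form nonzero closed `G`-invariant mutually orthogonal complementary subspaces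
of `ℓ²(G/H)`; in particular, if `G/H` is infinite, the quasi-regular representation is
reducible. -/
theorem stmt8 (G : Type*) [Group G] (H H' : Subgroup G) (hHH' : H ≤ H')
    (hnorm : ∀ h ∈ H, ∀ g ∈ H', g * h * g⁻¹ ∈ H)
    (s : G) (hs : s ∈ H') (hsH : s ∉ H)
    (hdecomp : ∀ g ∈ H', g ∈ H ∨ ∃ h ∈ H, g = s * h)
    (i : G ⧸ H → G ⧸ H) (hi : ∀ f : G, i (f : G ⧸ H) = ((f * s : G) : G ⧸ H))
    (π : G →* (lp (fun _ : G ⧸ H => ℂ) 2 ≃ₗᵢ[ℂ] lp (fun _ : G ⧸ H => ℂ) 2))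
    (hπ : ∀ (g : G) (φ : lp (fun _ : G ⧸ H => ℂ) 2) (x : G ⧸ H), π g φ x = φ (g⁻¹ • x)) :
    ∃ V₁ V₂ : Submodule ℂ (lp (fun _ : G ⧸ H => ℂ) 2),
      (∀ φ : lp (fun _ : G ⧸ H => ℂ) 2, φ ∈ V₁ ↔ ∀ x, φ (i x) = φ x) ∧
      (∀ φ : lp (fun _ : G ⧸ H => ℂ) 2, φ ∈ V₂ ↔ ∀ x, φ (i x) = -φ x) ∧
      V₁ ≠ ⊥ ∧ V₂ ≠ ⊥ ∧
      IsClosed (V₁ : Set (lp (fun _ : G ⧸ H => ℂ) 2)) ∧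
      IsClosed (V₂ : Set (lp (fun _ : G ⧸ H => ℂ) 2)) ∧
      (∀ (g : G), ∀ φ ∈ V₁, π g φ ∈ V₁) ∧
      (∀ (g : G), ∀ φ ∈ V₂, π g φ ∈ V₂) ∧
      V₂ = V₁ᗮ ∧
      (Infinite (G ⧸ H) →
        ∃ W : Submodule ℂ (lp (fun _ : G ⧸ H => ℂ) 2),
          IsClosed (W : Set (lp (fun _ : G ⧸ H => ℂ) 2)) ∧
          (∀ (g : G), ∀ φ ∈ W, π g φ ∈ W) ∧ W ≠ ⊥ ∧ W ≠ ⊤) :=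
  stmt8_general G H H' s hs hsH hdecomp i hi π hπ
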